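/- Let c > 0 be real and ε ∈ {1, −1}. The real-valued function f(x,t) := √c · sech((x + ε·c·t)/√c), regarded as taking values in ℂ, is smooth, nowhere zero, and satisfies ∂_t(f_{xt}/f) + 2·∂_x(conj(f)·f) = 0 at every point (since f is real, conj(f)·f = f²). -/

import Mathlib

/-- Partial derivative in the first (space) variable. -/
noncomputable def pdx (f : ℝ × ℝ → ℂ) (p : ℝ × ℝ) : ℂ := fderiv ℝ f p (1, 0)

/-- Partial derivative in the second (time) variable. -/
noncomputable def pdt (f : ℝ × ℝ → ℂ) (p : ℝ × ℝ) : ℂ := fderiv ℝ f p (0, 1)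

/-- Equation (E): ∂ₜ(f_{xt}/f) + 2 ∂ₓ(conj f · f) = 0 at every point. -/
def SatisfiesE (f : ℝ × ℝ → ℂ) : Prop :=
  ∀ p : ℝ × ℝ,
    pdt (fun q => pdt (fun r => pdx f r) q / f q) p
      + 2 * pdx (fun q => (starRingEnd ℂ) (f q) * f q) p = 0

/- Auxiliary material -/

noncomputable def Lmap (c ε s : ℝ) : ℝ × ℝ →L[ℝ] ℝ :=
  s⁻¹ • (ContinuousLinearMap.fst ℝ ℝ ℝ + (ε * c) • ContinuousLinearMap.snd ℝ ℝ ℝ)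

lemma hasFDerivAt_u (c ε s : ℝ) (p : ℝ × ℝ) :
    HasFDerivAt (fun q : ℝ × ℝ => (q.1 + ε * c * q.2) / s) (Lmap c ε s) p := by
  have h : (fun q : ℝ × ℝ => (q.1 + ε * c * q.2) / s) = ⇑(Lmap c ε s) := by
    funext q
    simp [Lmap, div_eq_inv_mul, smul_eq_mul]
    ring
  rw [h]
  exact (Lmap c ε s).hasFDerivAt

lemma key_fd (c ε s : ℝ) (φ : ℝ → ℝ) (d : ℝ) (p : ℝ × ℝ)
    (hφ : HasDerivAt φ d ((p.1 + ε * c * p.2) / s)) :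
    HasFDerivAt (fun q : ℝ × ℝ => ((φ ((q.1 + ε * c * q.2) / s) : ℝ) : ℂ))
      (Complex.ofRealCLM.comp (d • Lmap c ε s)) p :=
  Complex.ofRealCLM.hasFDerivAt.comp p (hφ.comp_hasFDerivAt p (hasFDerivAt_u c ε s p))

lemma key_pdx (c ε s : ℝ) (φ : ℝ → ℝ) (d : ℝ) (p : ℝ × ℝ)
    (hφ : HasDerivAt φ d ((p.1 + ε * c * p.2) / s)) :
    pdx (fun q : ℝ × ℝ => ((φ ((q.1 + ε * c * q.2) / s) : ℝ) : ℂ)) p = ((d / s : ℝ) : ℂ) := by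
  rw [pdx, (key_fd c ε s φ d p hφ).fderiv]
  simp [Lmap, smul_eq_mul, div_eq_mul_inv]

lemma key_pdt (c ε s : ℝ) (φ : ℝ → ℝ) (d : ℝ) (p : ℝ × ℝ)
    (hφ : HasDerivAt φ d ((p.1 + ε * c * p.2) / s)) :
    pdt (fun q : ℝ × ℝ => ((φ ((q.1 + ε * c * q.2) / s) : ℝ) : ℂ)) p
      = ((d * (ε * c) / s : ℝ) : ℂ) := by
  rw [pdt, (key_fd c ε s φ d p hφ).fderiv]
  push_cast
  simp [Lmap, smul_eq_mul, div_eq_mul_inv]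
  ring

lemma d0 (s y : ℝ) :
    HasDerivAt (fun y => s / Real.cosh y) (-s * Real.sinh y / Real.cosh y ^ 2) y := by
  have h := (hasDerivAt_const y s).div (Real.hasDerivAt_cosh y) (Real.cosh_pos y).ne'
  refine h.congr_deriv ?_
  norm_num only [Pi.pow_apply, Pi.neg_apply]
  field_simp
  ring

lemma d1 (y : ℝ) :
    HasDerivAt (fun y => -Real.sinh y / Real.cosh y ^ 2)
      ((2 * Real.sinh y ^ 2 - Real.cosh y ^ 2) / Real.cosh y ^ 3) y := by
  have h := ((Real.hasDerivAt_sinh y).neg).div ((Real.hasDerivAt_cosh y).pow 2)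
    (pow_ne_zero 2 (Real.cosh_pos y).ne')
  refine h.congr_deriv ?_
  norm_num only [Pi.pow_apply, Pi.neg_apply]
  have hc := (Real.cosh_pos y).ne'
  field_simp
  ring

lemma d3 (ε y : ℝ) :
    HasDerivAt (fun y => ε * (2 * Real.sinh y ^ 2 - Real.cosh y ^ 2) / Real.cosh y ^ 2)
      (ε * (4 * Real.sinh y) / Real.cosh y ^ 3) y := by
  have hnum : HasDerivAt (fun y => ε * (2 * Real.sinh y ^ 2 - Real.cosh y ^ 2))
      (ε * (2 * (2 * Real.sinh y ^ 1 * Real.cosh y) - 2 * Real.cosh y ^ 1 * Real.sinh y)) y := by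
    exact ((((Real.hasDerivAt_sinh y).pow 2).const_mul 2).sub
      ((Real.hasDerivAt_cosh y).pow 2)).const_mul ε
  have h := hnum.div ((Real.hasDerivAt_cosh y).pow 2) (pow_ne_zero 2 (Real.cosh_pos y).ne')
  refine h.congr_deriv ?_
  norm_num only [Pi.pow_apply, Pi.neg_apply]
  have hc := (Real.cosh_pos y).ne'
  have hid : Real.sinh y ^ 2 = Real.cosh y ^ 2 - 1 := Real.sinh_sq y
  field_simp
  linear_combination (-4 * ε * Real.sinh y) * hid

lemma d4 (s y : ℝ) :
    HasDerivAt (fun y => (s / Real.cosh y) ^ 2) (-2 * s ^ 2 * Real.sinh y / Real.cosh y ^ 3) y := by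
  have h := (d0 s y).pow 2
  refine h.congr_deriv ?_
  norm_num only [Pi.pow_apply, Pi.neg_apply]
  have hc := (Real.cosh_pos y).ne'
  field_simp

theorem stmt_2 (c : ℝ) (hc : 0 < c) (ε : ℝ) (hε : ε = 1 ∨ ε = -1)
    (f : ℝ × ℝ → ℂ)
    (hf : f = fun p => ((Real.sqrt c *
        (1 / Real.cosh ((p.1 + ε * c * p.2) / Real.sqrt c)) : ℝ) : ℂ)) :
    ContDiff ℝ (⊤ : ℕ∞) f ∧ (∀ p, f p ≠ 0) ∧ SatisfiesE f := by
  set s : ℝ := Real.sqrt c with hsdef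
  have hs : 0 < s := Real.sqrt_pos.2 hc
  have hsne : s ≠ 0 := hs.ne'
  have hc2 : s ^ 2 = c := Real.sq_sqrt hc.le
  -- u : the phase variable
  set u : ℝ × ℝ → ℝ := fun q => (q.1 + ε * c * q.2) / s with hu
  have hf' : f = fun q : ℝ × ℝ => (((fun y => s / Real.cosh y) (u q) : ℝ) : ℂ) := by
    rw [hf]; funext q; rw [mul_one_div]
  have hcoshne : ∀ y : ℝ, Real.cosh y ≠ 0 := fun y => (Real.cosh_pos y).ne'
  refine ⟨?_, ?_, ?_⟩
  · -- smoothness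
    rw [hf']
    have h1 : ContDiff ℝ (⊤ : ℕ∞) u := by
      apply ContDiff.div_const
      exact contDiff_fst.add (contDiff_const.mul contDiff_snd)
    have h2 : ContDiff ℝ (⊤ : ℕ∞) (fun y : ℝ => s / Real.cosh y) :=
      contDiff_const.div Real.contDiff_cosh hcoshne
    exact Complex.ofRealCLM.contDiff.comp (h2.comp h1)
  · -- nonvanishing
    intro p
    rw [hf']
    simp only [Complex.ofReal_ne_zero]
    exact div_ne_zero hsne (hcoshne _)
  · -- the equation
    intro p
    -- step 1 : pdx f
    have step1 : (fun r => pdx f r)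
        = fun q : ℝ × ℝ => (((fun y => -Real.sinh y / Real.cosh y ^ 2) (u q) : ℝ) : ℂ) := by
      funext q
      rw [hf', key_pdx c ε s _ _ q (d0 s (u q)), Complex.ofReal_inj]
      field_simp
    -- step 2 : the inner function pdt (pdx f) / f
    have step3 : (fun q => pdt (fun r => pdx f r) q / f q)
        = fun q : ℝ × ℝ =>
            (((fun y => ε * (2 * Real.sinh y ^ 2 - Real.cosh y ^ 2) / Real.cosh y ^ 2) (u q) : ℝ)
              : ℂ) := by
      funext q
      rw [step1, key_pdt c ε s _ _ q (d1 (u q)), hf']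
      rw [← Complex.ofReal_div]
      congr 1
      rw [← hc2]
      field_simp
    -- step 4 : pdt of the inner function
    have step4 : pdt (fun q => pdt (fun r => pdx f r) q / f q) p
        = ((ε * (4 * Real.sinh (u p)) / Real.cosh (u p) ^ 3 * (ε * c) / s : ℝ) : ℂ) := by
      rw [step3]
      exact key_pdt c ε s _ _ p (d3 ε (u p))
    -- step 5 : conj f * f
    have step5 : (fun q => (starRingEnd ℂ) (f q) * f q)
        = fun q : ℝ × ℝ => (((fun y => (s / Real.cosh y) ^ 2) (u q) : ℝ) : ℂ) := by
      funext q
      rw [hf']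
      simp only [Complex.conj_ofReal]
      push_cast
      ring
    have step6 : pdx (fun q => (starRingEnd ℂ) (f q) * f q) p
        = ((-2 * s ^ 2 * Real.sinh (u p) / Real.cosh (u p) ^ 3 / s : ℝ) : ℂ) := by
      rw [step5]
      exact key_pdx c ε s _ _ p (d4 s (u p))
    rw [step4, step6]
    have hε2 : ε ^ 2 = 1 := by rcases hε with h | h <;> rw [h] <;> norm_num
    have hreal : ε * (4 * Real.sinh (u p)) / Real.cosh (u p) ^ 3 * (ε * c) / s
        + 2 * (-2 * s ^ 2 * Real.sinh (u p) / Real.cosh (u p) ^ 3 / s) = 0 := by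
      rcases hε with h | h <;> subst h <;>
        (rw [← hc2]; field_simp; ring)
    calc ((ε * (4 * Real.sinh (u p)) / Real.cosh (u p) ^ 3 * (ε * c) / s : ℝ) : ℂ)
          + 2 * ((-2 * s ^ 2 * Real.sinh (u p) / Real.cosh (u p) ^ 3 / s : ℝ) : ℂ)
        = ((ε * (4 * Real.sinh (u p)) / Real.cosh (u p) ^ 3 * (ε * c) / s
            + 2 * (-2 * s ^ 2 * Real.sinh (u p) / Real.cosh (u p) ^ 3 / s) : ℝ) : ℂ) := by
          push_cast; ring
      _ = 0 := by rw [hreal, Complex.ofReal_zero]
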